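/- Let R = k[[t^{a_1}, …, t^{a_ℓ}]] be a numerical semigroup ring with e = a_1 ≥ 2, and let I be a monomial ideal with R ⊆ I ⊆ V = k[[t]] and J = K_R : I. Assume μ_R(I) = μ_R(J) = 2, IJ = K_R, and μ_R(K_R) = 4. Then e = a_1 ≥ 8. -/

import Mathlib

open CategoryTheory TensorProduct PowerSeries

set_option synthInstance.maxHeartbeats 1000000
set_option maxHeartbeats 2000000

noncomputable section

/-- Minimal number of generators of a submodule. -/
def minGen (R : Type*) {M : Type*} [Semiring R] [AddCommMonoid M] [Module R M]
    (p : Submodule R M) : ℕ :=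
  sInf {n | ∃ s : Finset M, s.card = n ∧ Submodule.span R (s : Set M) = p}

/-- The numerical semigroup `H = ⟨a_1, …, a_ℓ⟩ ⊆ ℕ`. -/
def nsH (l : ℕ) (a : Fin l → ℕ) : AddSubmonoid ℕ :=
  AddSubmonoid.closure (Set.range a)

/-- The conductor `c(H)` of the numerical semigroup `H`:
the least `c` with `n ∈ H` for all `n ≥ c`. -/
def nsCond (l : ℕ) (a : Fin l → ℕ) : ℕ :=
  sInf {c : ℕ | ∀ n : ℕ, c ≤ n → n ∈ nsH l a}

/-- `a = c(H) − 1`, the Frobenius number of `H`. -/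
def nsFrob (l : ℕ) (a : Fin l → ℕ) : ℕ := nsCond l a - 1

/-- The numerical semigroup ring `R = k[[t^{a_1}, …, t^{a_ℓ}]] ⊆ V = k[[t]]`. -/
def nsRing (k : Type*) [Field k] (l : ℕ) (a : Fin l → ℕ) :
    Subalgebra k (PowerSeries k) :=
  Algebra.adjoin k (Set.range fun i => (PowerSeries.X : PowerSeries k) ^ (a i))

/-- The canonical module `K_R = Σ_{n ∈ ℤ∖H} R t^{a−n}` of the numerical semigroup ring,
as the `R`-submodule of `V = k[[t]]` spanned by the monomials `t^m` (`m ∈ ℕ`) with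
`a − m ∉ H` (as integers), where `a = c(H) − 1`. -/
def nsCanon (k : Type*) [Field k] (l : ℕ) (a : Fin l → ℕ) :
    Submodule (nsRing k l a) (PowerSeries k) :=
  Submodule.span (nsRing k l a)
    {x : PowerSeries k | ∃ m : ℕ,
      (¬ ∃ h ∈ nsH l a, (h : ℤ) = (nsFrob l a : ℤ) - m) ∧
      x = (PowerSeries.X : PowerSeries k) ^ m}

/-- A monomial (fractional) ideal of the numerical semigroup ring: an `R`-submodule of
`V = k[[t]]` spanned by monomials `tⁿ`. -/
def IsMonomialSub (k : Type*) [Field k] (l : ℕ) (a : Fin l → ℕ)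
    (I : Submodule (nsRing k l a) (PowerSeries k)) : Prop :=
  ∃ Λ : Set ℕ, I = Submodule.span (nsRing k l a)
    ((fun n => (PowerSeries.X : PowerSeries k) ^ n) '' Λ)

/-- A monomial ideal of the numerical semigroup ring: an ideal generated by
powers of `t`. -/
def IsMonomialIdeal (k : Type*) [Field k] (l : ℕ) (a : Fin l → ℕ)
    (I : Ideal (nsRing k l a)) : Prop :=
  ∃ Λ : Set ℕ, I = Ideal.span
    {x : nsRing k l a | ∃ n ∈ Λ, (x : PowerSeries k) = (PowerSeries.X : PowerSeries k) ^ n}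

/-- The maximal ideal `m = (t^{a_1}, …, t^{a_ℓ})` of the numerical semigroup ring. -/
def nsMax (k : Type*) [Field k] (l : ℕ) (a : Fin l → ℕ) : Ideal (nsRing k l a) :=
  Ideal.span {x : nsRing k l a | ∃ i : Fin l,
    (x : PowerSeries k) = (PowerSeries.X : PowerSeries k) ^ (a i)}


/-- The evaluation map `I ⊗_R Hom_R(I, K) → K`, `x ⊗ f ↦ f x`. -/
def evalMap (R : Type*) [CommRing R] {M : Type*} [AddCommGroup M] [Module R M]
    (I : Submodule R M) (K : Type*) [AddCommGroup K] [Module R K] :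
    (I ⊗[R] (I →ₗ[R] K)) →ₗ[R] K :=
  TensorProduct.lift LinearMap.applyₗ

/-- The colon `M : N = {x ∈ A | x N ⊆ M}` of two `R`-submodules of an `R`-algebra `A`. -/
def colonSub {R A : Type*} [CommRing R] [CommRing A] [Algebra R A]
    (M N : Submodule R A) : Submodule R A where
  carrier := {x : A | ∀ y ∈ N, x * y ∈ M}
  add_mem' := fun {a b} ha hb y hy => by
    rw [add_mul]; exact M.add_mem (ha y hy) (hb y hy)
  zero_mem' := fun y hy => by rw [zero_mul]; exact M.zero_mem
  smul_mem' := fun c {x} hx y hy => by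
    rw [smul_mul_assoc]; exact M.smul_mem c (hx y hy)

/-- The set `S = {α_i : 1 ≤ i ≤ e−1}` where
`α_i = max {n ∈ ℤ∖H : n ≡ i mod e}`: the elements of `ℕ∖H` that are largest in their
residue class modulo `e`. (For `e ∈ H` the residue class `0 mod e` contributes nothing.) -/
def nsS (l : ℕ) (a : Fin l → ℕ) (e : ℕ) : Set ℕ :=
  {n : ℕ | n ∉ nsH l a ∧ ∀ m : ℕ, m ∉ nsH l a → m % e = n % e → m ≤ n}

/-- The numerical semigroup `H`, viewed inside `ℤ`. -/
def nsHz (l : ℕ) (a : Fin l → ℕ) : Set ℤ :=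
  {n : ℤ | ∃ h ∈ nsH l a, (h : ℤ) = n}

/-!
All modules in sight are monomial, so the statement is one about subsets `E ⊆ ℕ` with
`E + H ⊆ E`. The minimal number of generators of the span of `{tⁿ | n ∈ E}` is the number of
minimal elements of `E` over `H`: the coefficients at those exponents depend only on the
constant terms of the scalars. So `I = (1, t^b)`, `K_R` corresponds to the canonical ideal
`Ω = {m | F - m ∉ H}` and `J` to `{n | n, n + b ∈ Ω}`; counting generators in `IJ = K_R` forces
`J = (1, t^d)` and the minimal elements of `Ω` to be `0, b, d, b + d`. Duality of `Ω` makes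
the situation symmetric in `b` and `d`. Reading which of `2b, 2d, 2b + d, b + 2d` lie in `Ω`
modulo `e ∈ H`, the residues `β, δ` of `b, d` must satisfy: `0, β, δ, β + δ` are distinct
(distinct minimal elements lie in distinct classes), `2β, 2δ, 2β + δ, β + 2δ` are nonzero, and
`2β ≠ δ`, `2δ ≠ β`. A finite check shows that this is impossible modulo `e < 8`.
-/

open scoped Pointwise

theorem Set.exists_eq_pair_of_mem_of_ncard_eq_two {α : Type*} {S : Set α} {x : α} (hx : x ∈ S)
    (hS : S.ncard = 2) : ∃ y ≠ x, S = {x, y} := by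
  obtain ⟨u, v, huv, rfl⟩ := Set.ncard_eq_two.1 hS
  rcases hx with rfl | rfl
  exacts [⟨v, huv.symm, rfl⟩, ⟨u, huv, Set.pair_comm _ _⟩]

theorem exists_eq_of_ncard_eq_four {b : ℕ} {G K : Set ℕ} (hb : b ≠ 0) (hG : G.ncard = 2)
    (hK : K.ncard = 4) (h0 : 0 ∈ K) (hKG : K ⊆ {0, b} + G) :
    ∃ d, d ≠ 0 ∧ b ≠ d ∧ G = {0, d} ∧ K = {0, b, d, b + d} := by
  have h0G : 0 ∈ G := by
    obtain ⟨x, -, y, hy, hxy⟩ := hKG h0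
    obtain ⟨-, rfl⟩ := Nat.add_eq_zero_iff.1 hxy
    exact hy
  obtain ⟨d, hd, rfl⟩ := Set.exists_eq_pair_of_mem_of_ncard_eq_two h0G hG
  have hsum : ({0, b} + {0, d} : Set ℕ) = {0, b, d, b + d} := by
    ext n
    simp only [Set.mem_add, Set.mem_insert_iff, Set.mem_singleton_iff]
    constructor
    · rintro ⟨x, hx, y, hy, rfl⟩
      rcases hx with rfl | rfl <;> rcases hy with rfl | rfl <;> simp
    · rintro (rfl | rfl | rfl | rfl) <;> simp
  have hle : ({0, b, d, b + d} : Set ℕ).ncard ≤ 4 := by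
    have h1 := Set.ncard_insert_le 0 ({b, d, b + d} : Set ℕ)
    have h2 := Set.ncard_insert_le b ({d, b + d} : Set ℕ)
    have h3 := Set.ncard_insert_le d ({b + d} : Set ℕ)
    rw [Set.ncard_singleton] at h3
    omega
  have hKeq : K = {0, b, d, b + d} :=
    Set.eq_of_subset_of_ncard_le (hsum ▸ hKG) (hK ▸ hle)
  refine ⟨d, hd, ?_, rfl, hKeq⟩
  rintro rfl
  rw [hKeq, Set.insert_idem] at hK
  have h1 := Set.ncard_insert_le 0 ({b, b + b} : Set ℕ)
  have h2 := Set.ncard_insert_le b ({b + b} : Set ℕ)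
  rw [Set.ncard_singleton] at h2
  omega

section RelIdeal

variable {H : AddSubmonoid ℕ} {E : Set ℕ}

def IsRelIdeal (H : AddSubmonoid ℕ) (E : Set ℕ) : Prop :=
  E + (H : Set ℕ) ⊆ E

def minimalGenerators (H : AddSubmonoid ℕ) (E : Set ℕ) : Set ℕ :=
  {n | n ∈ E ∧ ∀ m ∈ E, ∀ h ∈ H, n = m + h → h = 0}

theorem IsRelIdeal.add_mem (hE : IsRelIdeal H E) {n h : ℕ} (hn : n ∈ E) (hh : h ∈ H) :
    n + h ∈ E :=
  hE (Set.add_mem_add hn hh)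

theorem IsRelIdeal.add_eq (hE : IsRelIdeal H E) : E + (H : Set ℕ) = E :=
  hE.antisymm (Set.subset_add_left E (zero_mem H))

theorem isRelIdeal_add (Λ : Set ℕ) : IsRelIdeal H (Λ + (H : Set ℕ)) := by
  rintro _ ⟨_, ⟨m, hm, h, hh, rfl⟩, h', hh', rfl⟩
  exact ⟨m, hm, h + h', add_mem hh hh', (add_assoc m h h').symm⟩

theorem IsRelIdeal.colon (hE : IsRelIdeal H E) (b : ℕ) :
    IsRelIdeal H {n | n ∈ E ∧ n + b ∈ E} := by
  rintro _ ⟨n, ⟨hn, hnb⟩, h, hh, rfl⟩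
  exact ⟨hE.add_mem hn hh, add_right_comm n h b ▸ hE.add_mem hnb hh⟩

theorem exists_mem_minimalGenerators_add {n : ℕ} (hn : n ∈ E) :
    ∃ g ∈ minimalGenerators H E, ∃ h ∈ H, n = g + h := by
  induction n using Nat.strong_induction_on with
  | _ n ih =>
    by_cases hg : n ∈ minimalGenerators H E
    · exact ⟨n, hg, 0, zero_mem H, rfl⟩
    obtain ⟨m, hm, h, hh, rfl, hh0⟩ : ∃ m ∈ E, ∃ h ∈ H, n = m + h ∧ h ≠ 0 := by
      by_contra! hno
      exact hg ⟨hn, hno⟩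
    obtain ⟨g, hgm, h', hh', rfl⟩ := ih m (by omega) hm
    exact ⟨g, hgm, h' + h, add_mem hh' hh, add_assoc g h' h⟩

theorem zero_mem_minimalGenerators (h0 : 0 ∈ E) : 0 ∈ minimalGenerators H E :=
  ⟨h0, fun _ _ _ _ h => by omega⟩

theorem minimalGenerators_add_subset (Λ : Set ℕ) : minimalGenerators H (Λ + (H : Set ℕ)) ⊆ Λ := by
  rintro _ ⟨⟨m, hm, h, hh, rfl⟩, hmin⟩
  obtain rfl : h = 0 := hmin m (Set.subset_add_left Λ (zero_mem H) hm) h hh rfl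
  simpa using hm

theorem exists_eq_add_mul_of_natCast_eq {e x y : ℕ} (h : (x : ZMod e) = y) (hxy : x ≤ y) :
    ∃ t, y = x + e * t := by
  obtain ⟨t, ht⟩ := (Nat.modEq_iff_dvd' hxy).1 ((ZMod.natCast_eq_natCast_iff _ _ _).1 h)
  exact ⟨t, by omega⟩

theorem mul_mem_of_left_mem {e : ℕ} (he : e ∈ H) (t : ℕ) : e * t ∈ H := by
  simpa [mul_comm] using nsmul_mem he t

theorem minimalGenerators_injOn_natCast {e : ℕ} (he : e ∈ H) :
    (minimalGenerators H E).InjOn (Nat.cast : ℕ → ZMod e) := by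
  have key : ∀ {x y}, x ∈ minimalGenerators H E → y ∈ minimalGenerators H E →
      (x : ZMod e) = y → x ≤ y → x = y := by
    intro x y hx hy hxy hle
    obtain ⟨t, rfl⟩ := exists_eq_add_mul_of_natCast_eq hxy hle
    have := hy.2 x hx.1 (e * t) (mul_mem_of_left_mem he t) rfl
    omega
  intro x hx y hy hxy
  rcases le_total x y with hle | hle
  exacts [key hx hy hxy hle, (key hy hx hxy.symm hle).symm]

theorem minimalGenerators_finite {e : ℕ} (he : e ∈ H) (he0 : e ≠ 0) :
    (minimalGenerators H E).Finite :=
  haveI : NeZero e := ⟨he0⟩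
  Set.Finite.of_finite_image (Set.toFinite _) (minimalGenerators_injOn_natCast he)

theorem natCast_ne_zero_of_not_mem (hE : IsRelIdeal H E) (h0 : 0 ∈ E) {e n : ℕ} (he : e ∈ H)
    (hn : n ∉ E) : (n : ZMod e) ≠ 0 := by
  intro hn0
  obtain ⟨t, rfl⟩ :=
    exists_eq_add_mul_of_natCast_eq (e := e) (x := 0) (by rw [Nat.cast_zero, hn0]) n.zero_le
  exact hn (hE.add_mem h0 (mul_mem_of_left_mem he t))

theorem two_mul_natCast_ne_of_colon (hE : IsRelIdeal H E) (h0 : 0 ∈ E) {e b d : ℕ} (he : e ∈ H)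
    (hb : b ∈ minimalGenerators H E) (hd : d ∈ minimalGenerators H E)
    (hbd : b + d ∈ minimalGenerators H E) (hb0 : b ≠ 0) (hne : b ≠ d)
    (hJ : ∀ n ∈ E, n + b ∈ E → n ∈ H ∨ ∃ h ∈ H, n = d + h) :
    2 * (b : ZMod e) ≠ 0 ∧ 2 * (b : ZMod e) ≠ d ∧ 2 * (b : ZMod e) + d ≠ 0 := by
  have hbb : b + b ∉ E := by
    intro hc
    rcases hJ b hb.1 hc with hbH | ⟨h, hh, heq⟩
    · exact hb0 (hb.2 0 h0 b hbH (zero_add b).symm)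
    · exact hne (by rw [heq, hb.2 d hd.1 h hh heq, add_zero])
  have hbbd : b + b + d ∉ E := by
    intro hc
    rcases hJ (b + d) hbd.1 (by rwa [add_right_comm]) with hH | ⟨h, hh, heq⟩
    · have := hbd.2 0 h0 (b + d) hH (zero_add _).symm
      omega
    · obtain rfl : h = b := by omega
      exact hb0 (hb.2 0 h0 h hh (zero_add h).symm)
  have hbb_ne_d : ((b + b : ℕ) : ZMod e) ≠ d := by
    intro hcast
    rcases le_total (b + b) d with hle | hle
    · obtain ⟨t, rfl⟩ := exists_eq_add_mul_of_natCast_eq hcast hle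
      have het := mul_mem_of_left_mem he t
      rcases hJ (b + e * t) (hE.add_mem hb.1 het)
        (by rw [add_right_comm]; exact hd.1) with hH | ⟨h, _, heq⟩
      · have := hd.2 b hb.1 (b + e * t) hH (by ring)
        omega
      · omega
    · obtain ⟨t, ht⟩ := exists_eq_add_mul_of_natCast_eq hcast.symm hle
      exact hbb (ht ▸ hE.add_mem hd.1 (mul_mem_of_left_mem he t))
  refine ⟨?_, ?_, ?_⟩
  · simpa [two_mul] using natCast_ne_zero_of_not_mem hE h0 he hbb
  · simpa [two_mul] using hbb_ne_d
  · simpa [two_mul] using natCast_ne_zero_of_not_mem hE h0 he hbbd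

end RelIdeal

section CanonicalIdeal

variable {H : AddSubmonoid ℕ} {F : ℕ}

def canonicalIdeal (H : AddSubmonoid ℕ) (F : ℕ) : Set ℕ :=
  {m | ¬∃ h ∈ H, (h : ℤ) = F - m}

theorem isRelIdeal_canonicalIdeal : IsRelIdeal H (canonicalIdeal H F) := by
  rintro _ ⟨m, hm, h, hh, rfl⟩ ⟨h', hh', heq⟩
  exact hm ⟨h' + h, add_mem hh' hh, by push_cast at heq ⊢; omega⟩

theorem zero_mem_canonicalIdeal (hF : F ∉ H) : 0 ∈ canonicalIdeal H F := by
  rintro ⟨h, hh, heq⟩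
  obtain rfl : h = F := by omega
  exact hF hh

theorem canonicalIdeal_colon_symm (hF : ∀ n > F, n ∈ H) {b d : ℕ}
    (hJ : ∀ n ∈ canonicalIdeal H F, n + b ∈ canonicalIdeal H F → n ∈ H ∨ ∃ h ∈ H, n = d + h) :
    ∀ n ∈ canonicalIdeal H F, n + d ∈ canonicalIdeal H F → n ∈ H ∨ ∃ h ∈ H, n = b + h := by
  intro n hn hnd
  -- `n ↦ F - n` exchanges membership in `H` with non-membership in `canonicalIdeal H F`
  by_contra! ⟨hnH, hnb⟩
  have hnF : n ≤ F := not_lt.1 fun h => hnH (hF n h)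
  have hy : F - n ∈ canonicalIdeal H F := by
    rintro ⟨h, hh, heq⟩
    obtain rfl : h = n := by omega
    exact hnH hh
  have hyb : F - n + b ∈ canonicalIdeal H F := by
    rintro ⟨h, hh, heq⟩
    exact hnb h hh (by omega)
  rcases hJ _ hy hyb with hyH | ⟨h, hh, hyd⟩
  · exact hn ⟨F - n, hyH, by omega⟩
  · exact hnd ⟨h, hh, by push_cast; omega⟩

theorem eight_le_of_residues {e : ℕ} (he : e ≠ 0) (β δ : ZMod e) (hβ : β ≠ 0) (hδ : δ ≠ 0)
    (hβδ : β + δ ≠ 0) (hne : β ≠ δ) (h2β : 2 * β ≠ 0) (h2β_ne : 2 * β ≠ δ) (h2βδ : 2 * β + δ ≠ 0)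
    (h2δ : 2 * δ ≠ 0) (h2δ_ne : 2 * δ ≠ β) (h2δβ : 2 * δ + β ≠ 0) : 8 ≤ e := by
  by_contra! he8
  have he1 : 1 ≤ e := Nat.one_le_iff_ne_zero.2 he
  have : ∀ β δ : ZMod e, ¬(β ≠ 0 ∧ δ ≠ 0 ∧ β + δ ≠ 0 ∧ β ≠ δ ∧ 2 * β ≠ 0 ∧ 2 * β ≠ δ ∧
      2 * β + δ ≠ 0 ∧ 2 * δ ≠ 0 ∧ 2 * δ ≠ β ∧ 2 * δ + β ≠ 0) := by
    interval_cases e <;> decide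
  exact this β δ ⟨hβ, hδ, hβδ, hne, h2β, h2β_ne, h2βδ, h2δ, h2δ_ne, h2δβ⟩

theorem eight_le_of_minimalGenerators_canonicalIdeal (hF : F ∉ H) (hF' : ∀ n > F, n ∈ H)
    {e : ℕ} (he : e ∈ H) (he0 : e ≠ 0) {b d : ℕ} (hb0 : b ≠ 0) (hd0 : d ≠ 0) (hbd : b ≠ d)
    (hK : minimalGenerators H (canonicalIdeal H F) = {0, b, d, b + d})
    (hJ : minimalGenerators H {n | n ∈ canonicalIdeal H F ∧ n + b ∈ canonicalIdeal H F} = {0, d}) :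
    8 ≤ e := by
  have hΩ : IsRelIdeal H (canonicalIdeal H F) := isRelIdeal_canonicalIdeal
  have h0 := zero_mem_canonicalIdeal hF
  have hJbd : ∀ n ∈ canonicalIdeal H F, n + b ∈ canonicalIdeal H F →
      n ∈ H ∨ ∃ h ∈ H, n = d + h := by
    intro n hn hnb
    obtain ⟨g, hg, h, hh, rfl⟩ := exists_mem_minimalGenerators_add (H := H)
      (show n ∈ {n | n ∈ canonicalIdeal H F ∧ n + b ∈ canonicalIdeal H F} from ⟨hn, hnb⟩)
    rw [hJ] at hg
    rcases hg with rfl | rfl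
    exacts [Or.inl (by simpa using hh), Or.inr ⟨h, hh, rfl⟩]
  have mem : ∀ x ∈ ({0, b, d, b + d} : Set ℕ), x ∈ minimalGenerators H (canonicalIdeal H F) :=
    fun x hx => hK ▸ hx
  have hres : ∀ {x y : ℕ}, x ∈ ({0, b, d, b + d} : Set ℕ) → y ∈ ({0, b, d, b + d} : Set ℕ) →
      (x : ZMod e) = y → x = y :=
    fun hx hy hxy => minimalGenerators_injOn_natCast he (mem _ hx) (mem _ hy) hxy
  obtain ⟨h2β, h2β_ne, h2βδ⟩ := two_mul_natCast_ne_of_colon hΩ h0 he (mem b (by simp))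
    (mem d (by simp)) (mem (b + d) (by simp)) hb0 hbd hJbd
  obtain ⟨h2δ, h2δ_ne, h2δβ⟩ := two_mul_natCast_ne_of_colon hΩ h0 he (mem d (by simp))
    (mem b (by simp)) (add_comm b d ▸ mem (b + d) (by simp)) hd0 hbd.symm
    (canonicalIdeal_colon_symm hF' hJbd)
  refine eight_le_of_residues he0 b d (fun h => hb0 ?_) (fun h => hd0 ?_)
    (fun h => ?_) (fun h => hbd ?_) h2β h2β_ne h2βδ h2δ h2δ_ne h2δβ
  · exact hres (by simp) (by simp) (by simpa using h)
  · exact hres (by simp) (by simp) (by simpa using h)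
  · have := hres (x := b + d) (y := 0) (by simp) (by simp) (by simpa using h)
    omega
  · exact hres (by simp) (by simp) h

end CanonicalIdeal

theorem mem_colonSub_span_iff {R A : Type*} [CommRing R] [CommRing A] [Algebra R A]
    {M : Submodule R A} {s : Set A} {x : A} :
    x ∈ colonSub M (Submodule.span R s) ↔ ∀ y ∈ s, x * y ∈ M := by
  refine ⟨fun hx y hy => hx y (Submodule.subset_span hy), fun hx y hy => ?_⟩
  have : Submodule.span R s ≤ M.comap (LinearMap.mulLeft R x) := Submodule.span_le.2 hx
  exact this hy

section MonomialSpan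

variable {k : Type*} [Field k] {l : ℕ} {a : Fin l → ℕ} {E Λ : Set ℕ}

variable (k l a) in
def monomialSpan (E : Set ℕ) : Submodule (nsRing k l a) k⟦X⟧ :=
  Submodule.span (nsRing k l a) ((X ^ ·) '' E)

theorem pow_mem_nsRing {h : ℕ} (hh : h ∈ nsH l a) : (X : k⟦X⟧) ^ h ∈ nsRing k l a := by
  induction hh using AddSubmonoid.closure_induction with
  | mem x hx => obtain ⟨i, rfl⟩ := hx; exact Algebra.subset_adjoin ⟨i, rfl⟩
  | zero => simp [(nsRing k l a).one_mem]
  | add x y _ _ hx hy => rw [pow_add]; exact mul_mem hx hy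

theorem coeff_eq_zero_of_mem_nsRing {x : k⟦X⟧} (hx : x ∈ nsRing k l a) {n : ℕ}
    (hn : n ∉ nsH l a) : coeff n x = 0 := by
  induction hx using Algebra.adjoin_induction generalizing n with
  | mem y hy =>
    obtain ⟨i, rfl⟩ := hy
    rw [coeff_X_pow, if_neg]
    rintro rfl
    exact hn (AddSubmonoid.subset_closure ⟨i, rfl⟩)
  | algebraMap r =>
    rw [PowerSeries.algebraMap_apply, Algebra.algebraMap_self_apply, coeff_C, if_neg]
    rintro rfl
    exact hn (zero_mem _)
  | add y z _ _ hy hz => rw [map_add, hy hn, hz hn, add_zero]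
  | mul y z _ _ hy hz =>
    rw [coeff_mul]
    refine Finset.sum_eq_zero fun p hp => ?_
    rw [Finset.HasAntidiagonal.mem_antidiagonal] at hp
    by_cases h1 : p.1 ∈ nsH l a
    · rw [hz fun h2 => hn (hp ▸ add_mem h1 h2), mul_zero]
    · rw [hy h1, zero_mul]

theorem pow_add_mem_monomialSpan {m h : ℕ} (hm : m ∈ Λ) (hh : h ∈ nsH l a) :
    (X : k⟦X⟧) ^ (m + h) ∈ monomialSpan k l a Λ := by
  have hXm : (X : k⟦X⟧) ^ m ∈ monomialSpan k l a Λ := Submodule.subset_span ⟨m, hm, rfl⟩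
  rw [pow_add, mul_comm]
  exact Submodule.smul_mem _ (⟨X ^ h, pow_mem_nsRing hh⟩ : nsRing k l a) hXm

theorem mem_add_of_coeff_ne_zero {x : k⟦X⟧} (hx : x ∈ monomialSpan k l a Λ) {n : ℕ}
    (hc : coeff n x ≠ 0) : n ∈ Λ + (nsH l a : Set ℕ) := by
  induction hx using Submodule.span_induction generalizing n with
  | mem y hy =>
    obtain ⟨m, hm, rfl⟩ := hy
    obtain rfl : n = m := by by_contra hne; exact hc (by rw [coeff_X_pow, if_neg hne])
    exact ⟨n, hm, 0, zero_mem _, add_zero n⟩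
  | zero => simp at hc
  | add y z _ _ hy hz =>
    by_cases h1 : coeff n y = 0
    · exact hz (by rwa [map_add, h1, zero_add] at hc)
    · exact hy h1
  | smul r y _ hy =>
    obtain ⟨p, hp, hne⟩ := Finset.exists_ne_zero_of_sum_ne_zero (coeff_mul n (r : k⟦X⟧) y ▸ hc)
    rw [Finset.HasAntidiagonal.mem_antidiagonal] at hp
    have hpH : p.1 ∈ nsH l a := by
      by_contra hnH
      exact hne (by rw [coeff_eq_zero_of_mem_nsRing r.2 hnH, zero_mul])
    obtain ⟨m, hm, h, hh, hmh⟩ := hy (right_ne_zero_of_mul hne)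
    exact ⟨m, hm, h + p.1, add_mem hh hpH, by beta_reduce at hmh ⊢; omega⟩

theorem pow_mem_monomialSpan_iff {n : ℕ} :
    (X : k⟦X⟧) ^ n ∈ monomialSpan k l a Λ ↔ n ∈ Λ + (nsH l a : Set ℕ) := by
  refine ⟨fun h => mem_add_of_coeff_ne_zero h (by simp), ?_⟩
  rintro ⟨m, hm, h, hh, rfl⟩
  exact pow_add_mem_monomialSpan hm hh

theorem monomialSpan_add : monomialSpan k l a (Λ + (nsH l a : Set ℕ)) = monomialSpan k l a Λ := by
  refine le_antisymm ?_ (Submodule.span_mono (Set.image_mono (Set.subset_add_left Λ (zero_mem _))))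
  rw [monomialSpan, Submodule.span_le]
  rintro _ ⟨_, ⟨m, hm, h, hh, rfl⟩, rfl⟩
  exact pow_add_mem_monomialSpan hm hh

theorem monomialSpan_minimalGenerators :
    monomialSpan k l a (minimalGenerators (nsH l a) E) = monomialSpan k l a E := by
  refine le_antisymm (Submodule.span_mono (Set.image_mono fun _ hn => hn.1)) ?_
  rw [monomialSpan, Submodule.span_le]
  rintro _ ⟨n, hn, rfl⟩
  obtain ⟨g, hg, h, hh, rfl⟩ := exists_mem_minimalGenerators_add hn
  exact pow_add_mem_monomialSpan hg hh

theorem monomialSpan_mul (U W : Set ℕ) :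
    monomialSpan k l a U * monomialSpan k l a W = monomialSpan k l a (U + W) := by
  rw [monomialSpan, monomialSpan, Submodule.span_mul_span, monomialSpan]
  congr 1
  ext x
  simp only [Set.mem_mul, Set.mem_add, Set.mem_image]
  constructor
  · rintro ⟨_, ⟨m, hm, rfl⟩, _, ⟨n, hn, rfl⟩, rfl⟩
    exact ⟨m + n, ⟨m, hm, n, hn, rfl⟩, pow_add _ _ _⟩
  · rintro ⟨_, ⟨m, hm, n, hn, rfl⟩, rfl⟩
    exact ⟨_, ⟨m, hm, rfl⟩, _, ⟨n, hn, rfl⟩, (pow_add _ _ _).symm⟩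

theorem minimalGenerators_subset_of_monomialSpan_eq (hE : IsRelIdeal (nsH l a) E)
    (h : monomialSpan k l a Λ = monomialSpan k l a E) : minimalGenerators (nsH l a) E ⊆ Λ := by
  have hΛE : Λ + (nsH l a : Set ℕ) = E := by
    ext n
    rw [← pow_mem_monomialSpan_iff (k := k), h, pow_mem_monomialSpan_iff, hE.add_eq]
  exact hΛE ▸ minimalGenerators_add_subset Λ

variable (k) in
theorem nsRing_le_range_coe :
    nsRing k l a ≤ (Polynomial.coeToPowerSeries.algHom (R := k) k).range :=
  Algebra.adjoin_le (Set.range_subset_iff.2 fun i => ⟨Polynomial.X ^ a i, by simp⟩)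

theorem mem_range_coe_of_mem_monomialSpan {x : k⟦X⟧} (hx : x ∈ monomialSpan k l a Λ) :
    x ∈ (Polynomial.coeToPowerSeries.algHom (R := k) k).range := by
  induction hx using Submodule.span_induction with
  | mem y hy => obtain ⟨n, -, rfl⟩ := hy; exact ⟨Polynomial.X ^ n, by simp⟩
  | zero => exact zero_mem _
  | add y z _ _ hy hz => exact add_mem hy hz
  | smul r y _ hy => exact mul_mem (nsRing_le_range_coe k r.2) hy

theorem mem_monomialSpan_iff (hE : IsRelIdeal (nsH l a) E) {x : k⟦X⟧} :
    x ∈ monomialSpan k l a E ↔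
      x ∈ (Polynomial.coeToPowerSeries.algHom (R := k) k).range ∧ ∀ n, coeff n x ≠ 0 → n ∈ E := by
  refine ⟨fun hx => ⟨mem_range_coe_of_mem_monomialSpan hx,
    fun n hn => hE.add_eq ▸ mem_add_of_coeff_ne_zero hx hn⟩, ?_⟩
  rintro ⟨⟨p, rfl⟩, hsupp⟩
  rw [p.as_sum_support_C_mul_X_pow, map_sum]
  refine Submodule.sum_mem _ fun n hn => ?_
  have hnE : n ∈ E := hsupp n (by simpa using hn)
  have hXn : (X : k⟦X⟧) ^ n ∈ monomialSpan k l a E := Submodule.subset_span ⟨n, hnE, rfl⟩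
  simpa [← smul_eq_C_mul] using Submodule.smul_of_tower_mem _ (p.coeff n) hXn

theorem coeff_smul_of_mem_minimalGenerators (hE : IsRelIdeal (nsH l a) E) {g : ℕ}
    (hg : g ∈ minimalGenerators (nsH l a) E) (r : nsRing k l a) {y : k⟦X⟧}
    (hy : y ∈ monomialSpan k l a E) : coeff g (r • y) = coeff 0 (r : k⟦X⟧) * coeff g y := by
  rw [Subalgebra.smul_def, smul_eq_mul, coeff_mul, Finset.sum_eq_single ((0 : ℕ), g)]
  · rintro ⟨i, j⟩ hij hne
    rw [Finset.HasAntidiagonal.mem_antidiagonal] at hij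
    by_contra hc
    have hiH : i ∈ nsH l a := by
      by_contra hiH
      exact hc (by rw [coeff_eq_zero_of_mem_nsRing r.2 hiH, zero_mul])
    have hjE : j ∈ E := ((mem_monomialSpan_iff hE).1 hy).2 j (right_ne_zero_of_mul hc)
    obtain rfl : i = 0 := hg.2 j hjE i hiH (by simp only at hij; omega)
    exact hne (by simp_all)
  · simp

theorem ncard_minimalGenerators_le (hE : IsRelIdeal (nsH l a) E)
    (hfin : (minimalGenerators (nsH l a) E).Finite) (s : Finset k⟦X⟧)
    (hs : Submodule.span (nsRing k l a) (s : Set k⟦X⟧) = monomialSpan k l a E) :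
    (minimalGenerators (nsH l a) E).ncard ≤ s.card := by
  classical
  set G := minimalGenerators (nsH l a) E
  have : Fintype G := hfin.fintype
  -- on `span R s`, `v` sees only the constant term of a scalar, so it lands in `span k (v '' s)`
  let v : k⟦X⟧ →ₗ[k] (G → k) := LinearMap.pi fun g => coeff (g : ℕ)
  have hv : ∀ y ∈ Submodule.span (nsRing k l a) (s : Set k⟦X⟧),
      v y ∈ Submodule.span k (v '' s) := by
    intro y hy
    induction hy using Submodule.span_induction with
    | mem y hy => exact Submodule.subset_span ⟨y, hy, rfl⟩
    | zero => simp
    | add y z _ _ hy hz => rw [map_add]; exact add_mem hy hz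
    | smul r y hy ihy =>
      have : v (r • y) = coeff 0 (r : k⟦X⟧) • v y := by
        ext g; exact coeff_smul_of_mem_minimalGenerators hE g.2 r (hs ▸ hy)
      rw [this]; exact Submodule.smul_mem _ _ ihy
  have htop : Submodule.span k (v '' s) = ⊤ := by
    rw [eq_top_iff, ← (Pi.basisFun k G).span_eq, Submodule.span_le]
    rintro _ ⟨g, rfl⟩
    have : v (X ^ (g : ℕ)) = Pi.basisFun k G g := by
      ext g'
      simp [v, coeff_X_pow, Pi.single_apply, Subtype.ext_iff, eq_comm]
    rw [← this]
    exact hv _ (hs ▸ Submodule.subset_span ⟨g, g.2.1, rfl⟩)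
  calc G.ncard = Module.finrank k (G → k) := by
        rw [Module.finrank_fintype_fun_eq_card, ← Nat.card_coe_set_eq, Nat.card_eq_fintype_card]
    _ = Module.finrank k (Submodule.span k (v '' s)) := by rw [htop, finrank_top]
    _ ≤ (s.image v).card := by
        have := finrank_span_finset_le_card (R := k) (s.image v)
        rw [Finset.coe_image] at this
        exact this
    _ ≤ s.card := Finset.card_image_le

theorem minGen_monomialSpan (hE : IsRelIdeal (nsH l a) E)
    (hfin : (minimalGenerators (nsH l a) E).Finite) :
    minGen (nsRing k l a) (monomialSpan k l a E) = (minimalGenerators (nsH l a) E).ncard := by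
  classical
  have hinj : Function.Injective ((X : k⟦X⟧) ^ · : ℕ → k⟦X⟧) := fun m n h => by
    simpa using congrArg (coeff m) h
  set s := hfin.toFinset.image ((X : k⟦X⟧) ^ ·)
  have hcard : s.card = (minimalGenerators (nsH l a) E).ncard := by
    rw [Finset.card_image_of_injective _ hinj, Set.ncard_eq_toFinset_card _ hfin]
  have hs : Submodule.span (nsRing k l a) (s : Set k⟦X⟧) = monomialSpan k l a E := by
    rw [Finset.coe_image, hfin.coe_toFinset]
    exact monomialSpan_minimalGenerators
  refine le_antisymm (Nat.sInf_le ⟨s, hcard, hs⟩) (le_csInf ⟨_, s, rfl, hs⟩ ?_)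
  rintro _ ⟨t, rfl, ht⟩
  exact ncard_minimalGenerators_le hE hfin t ht

end MonomialSpan

section NumericalSemigroupRing

variable {k : Type*} [Field k] {l : ℕ} {a : Fin l → ℕ}

theorem frobeniusNumber_nsFrob (hl : 0 < l) (hmono : StrictMono a)
    (hgcd : Finset.univ.gcd a = 1) (he2 : 2 ≤ a ⟨0, hl⟩) :
    FrobeniusNumber (nsFrob l a) (Set.range a) := by
  have hgcd' : Nat.setGcd (Set.range a) = 1 :=
    Nat.dvd_one.1 (hgcd ▸ Finset.dvd_gcd fun i _ => Nat.setGcd_dvd_of_mem ⟨i, rfl⟩)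
  have hone : 1 ∉ Set.range a := by
    rintro ⟨i, hi⟩
    have := hmono.monotone (show (⟨0, hl⟩ : Fin l) ≤ i from Nat.zero_le _)
    omega
  obtain ⟨F, hF⟩ := exists_frobeniusNumber_iff.2 ⟨hgcd', hone⟩
  obtain ⟨hFH, hgt⟩ := frobeniusNumber_iff.1 hF
  have hcond : nsCond l a = F + 1 := by
    unfold nsCond
    refine (Nat.sInf_upward_closed_eq_succ_iff ?_ F).2
      ⟨fun n hn => hgt n hn, fun h => hFH (h F le_rfl)⟩
    exact fun _ _ hle h n hn => h n (hle.trans hn)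
  rwa [nsFrob, hcond, Nat.add_sub_cancel]

theorem nsCanon_eq_monomialSpan :
    nsCanon k l a = monomialSpan k l a (canonicalIdeal (nsH l a) (nsFrob l a)) := by
  unfold nsCanon monomialSpan
  congr 1
  ext x
  simp [canonicalIdeal, eq_comm]

theorem colonSub_nsCanon_pair (b : ℕ) :
    colonSub (nsCanon k l a) (monomialSpan k l a {0, b}) =
      monomialSpan k l a {n | n ∈ canonicalIdeal (nsH l a) (nsFrob l a) ∧
        n + b ∈ canonicalIdeal (nsH l a) (nsFrob l a)} := by
  have hK : IsRelIdeal (nsH l a) (canonicalIdeal (nsH l a) (nsFrob l a)) :=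
    isRelIdeal_canonicalIdeal
  ext x
  rw [monomialSpan, mem_colonSub_span_iff, Set.forall_mem_image, nsCanon_eq_monomialSpan,
    mem_monomialSpan_iff (hK.colon b)]
  simp only [Set.forall_mem_insert, Set.mem_singleton_iff, forall_eq, pow_zero, mul_one,
    mem_monomialSpan_iff hK]
  constructor
  · rintro ⟨⟨hP, h1⟩, -, h2⟩
    exact ⟨hP, fun n hn => ⟨h1 n hn, h2 (n + b) (by rwa [coeff_mul_X_pow])⟩⟩
  · rintro ⟨hP, h⟩
    refine ⟨⟨hP, fun n hn => (h n hn).1⟩, mul_mem hP ⟨Polynomial.X ^ b, by simp⟩, fun n hn => ?_⟩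
    rw [coeff_mul_X_pow'] at hn
    split_ifs at hn with hbn
    · simpa [Nat.sub_add_cancel hbn] using (h _ hn).2
    · exact absurd rfl hn

theorem exists_eq_monomialSpan_pair {I : Submodule (nsRing k l a) k⟦X⟧}
    (hmon : IsMonomialSub k l a I) (h1 : (1 : k⟦X⟧) ∈ I) (hmu : minGen (nsRing k l a) I = 2)
    (hfin : ∀ E, (minimalGenerators (nsH l a) E).Finite) :
    ∃ b ≠ 0, I = monomialSpan k l a {0, b} := by
  obtain ⟨Λ, rfl⟩ := hmon
  have hI := (monomialSpan_add (k := k) (l := l) (a := a) (Λ := Λ)).symm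
  rw [monomialSpan] at hI
  rw [hI, minGen_monomialSpan (isRelIdeal_add Λ) (hfin _)] at hmu
  rw [hI, ← pow_zero X, pow_mem_monomialSpan_iff, (isRelIdeal_add Λ).add_eq] at h1
  obtain ⟨b, hb, hgen⟩ :=
    Set.exists_eq_pair_of_mem_of_ncard_eq_two (zero_mem_minimalGenerators h1) hmu
  exact ⟨b, hb, by rw [hI, ← monomialSpan_minimalGenerators, hgen]⟩

end NumericalSemigroupRing

theorem stmt16_general (k : Type*) [Field k] (l : ℕ) (hl : 0 < l) (a : Fin l → ℕ)
    (hmono : StrictMono a) (hgcd : Finset.univ.gcd a = 1)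
    (he2 : 2 ≤ a ⟨0, hl⟩)
    (I : Submodule (nsRing k l a) (PowerSeries k)) (hmon : IsMonomialSub k l a I)
    (h1 : (1 : PowerSeries k) ∈ I)
    (hmuI : minGen (nsRing k l a) I = 2)
    (hmuJ : minGen (nsRing k l a) (colonSub (nsCanon k l a) I) = 2)
    (hIJ : I * colonSub (nsCanon k l a) I = nsCanon k l a)
    (hmuK : minGen (nsRing k l a) (nsCanon k l a) = 4) :
    8 ≤ a ⟨0, hl⟩ := by
  have he : a ⟨0, hl⟩ ∈ nsH l a := AddSubmonoid.subset_closure ⟨_, rfl⟩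
  have hfin : ∀ E, (minimalGenerators (nsH l a) E).Finite :=
    fun _ => minimalGenerators_finite he (by omega)
  obtain ⟨hF, hF'⟩ := frobeniusNumber_iff.1 (frobeniusNumber_nsFrob hl hmono hgcd he2)
  have hK : IsRelIdeal (nsH l a) (canonicalIdeal (nsH l a) (nsFrob l a)) :=
    isRelIdeal_canonicalIdeal
  obtain ⟨b, hb0, rfl⟩ := exists_eq_monomialSpan_pair hmon h1 hmuI hfin
  rw [colonSub_nsCanon_pair, minGen_monomialSpan (hK.colon b) (hfin _)] at hmuJ
  rw [colonSub_nsCanon_pair, nsCanon_eq_monomialSpan] at hIJ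
  rw [nsCanon_eq_monomialSpan, minGen_monomialSpan hK (hfin _)] at hmuK
  obtain ⟨d, hd0, hbd, hJ, hKgen⟩ := exists_eq_of_ncard_eq_four hb0 hmuJ hmuK
    (zero_mem_minimalGenerators (zero_mem_canonicalIdeal hF))
    (minimalGenerators_subset_of_monomialSpan_eq (k := k) hK
      (by rw [← monomialSpan_mul, monomialSpan_minimalGenerators, hIJ]))
  exact eight_le_of_minimalGenerators_canonicalIdeal hF hF' he (by omega) hb0 hd0 hbd hKgen hJ

/-- (Proposition 5.3) Let `I` be a monomial ideal with `R ⊆ I ⊆ V` and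
`J = K_R : I`. If `μ_R(I) = μ_R(J) = 2`, `IJ = K_R` and `μ_R(K_R) = 4`, then
`e = a_1 ≥ 8`. -/
theorem stmt16 (k : Type*) [Field k] (l : ℕ) (hl : 0 < l) (a : Fin l → ℕ)
    (hpos : 0 < a ⟨0, hl⟩) (hmono : StrictMono a) (hgcd : Finset.univ.gcd a = 1)
    (he2 : 2 ≤ a ⟨0, hl⟩)
    (I : Submodule (nsRing k l a) (PowerSeries k)) (hmon : IsMonomialSub k l a I)
    (h1 : (1 : PowerSeries k) ∈ I)
    (hmuI : minGen (nsRing k l a) I = 2)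
    (hmuJ : minGen (nsRing k l a) (colonSub (nsCanon k l a) I) = 2)
    (hIJ : I * colonSub (nsCanon k l a) I = nsCanon k l a)
    (hmuK : minGen (nsRing k l a) (nsCanon k l a) = 4) :
    8 ≤ a ⟨0, hl⟩ :=
  stmt16_general k l hl a hmono hgcd he2 I hmon h1 hmuI hmuJ hIJ hmuK

end
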